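/- Let G = (V, E) be a graph with a linear order < on E, F a spanning forest of G, e an internally active edge of F, and f an externally active edge of F. Then k(F) = k(F + f) and k(F − e + f) = k(F − e) = k(F) + 1, where k denotes the number of connected components. In particular, adding the externally active edge f cannot reconnect the two components created by deleting the internally active edge e. -/

import Mathlib

open Finset

attribute [local instance] Classical.propDecidable

/-- A multigraph on vertex type `V` with edge index type `E` is given by a map
`ends : E → Sym2 V` (loops and parallel edges are allowed).  For an edge subset
`A ⊆ E`, `edgeGraph ends A` is the simple graph on `V` whose adjacency is
witnessed by some edge of `A`; it determines the connected components of the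
spanning subgraph `(V, A)`. -/
def edgeGraph {V E : Type} (ends : E → Sym2 V) (A : Finset E) : SimpleGraph V where
  Adj a b := a ≠ b ∧ ∃ e ∈ A, ends e = s(a, b)
  symm := ⟨by
    rintro a b ⟨hab, e, he, hs⟩
    exact ⟨Ne.symm hab, e, he, by rw [hs, Sym2.eq_swap]⟩⟩
  loopless := ⟨by rintro a ⟨h, -⟩; exact h rfl⟩

/-- `kc ends A` is the number of connected components of the spanning subgraph `(V, A)`. -/
noncomputable def kc {V E : Type} (ends : E → Sym2 V) (A : Finset E) : ℕ :=
  Nat.card (edgeGraph ends A).ConnectedComponent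

/-- `(V, A)` is a spanning forest of `(V, E)`: it is a forest
(`|A| + k((V,A)) = |V|`, which rules out loops, parallel edges and cycles)
with as many connected components as the whole graph. -/
def IsSpanningForest {V E : Type} [Fintype V] [Fintype E] (ends : E → Sym2 V)
    (A : Finset E) : Prop :=
  A.card + kc ends A = Fintype.card V ∧ kc ends A = kc ends Finset.univ

/-- `F - e + f`. -/
def swapEdge {E : Type} [DecidableEq E] (A : Finset E) (e f : E) : Finset E :=
  insert f (A.erase e)

/-- `e` is internally active in the spanning forest `(V, A)`. -/
def InternallyActive {V E : Type} [Fintype V] [Fintype E] [DecidableEq E] [LinearOrder E]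
    (ends : E → Sym2 V) (A : Finset E) (e : E) : Prop :=
  e ∈ A ∧ ¬ ∃ f, f ∉ A ∧ e < f ∧ IsSpanningForest ends (swapEdge A e f)

/-- `f` is externally active in the spanning forest `(V, A)`. -/
def ExternallyActive {V E : Type} [Fintype V] [Fintype E] [DecidableEq E] [LinearOrder E]
    (ends : E → Sym2 V) (A : Finset E) (f : E) : Prop :=
  f ∉ A ∧ ¬ ∃ e, e ∈ A ∧ f < e ∧ IsSpanningForest ends (swapEdge A e f)

/-- The set `E_i(F)` of internally active edges of the spanning forest `F = (V, A)`. -/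
noncomputable def intAct {V E : Type} [Fintype V] [Fintype E] [DecidableEq E] [LinearOrder E]
    (ends : E → Sym2 V) (A : Finset E) : Finset E :=
  Finset.univ.filter (InternallyActive ends A)

/-- The set `E_e(F)` of externally active edges of the spanning forest `F = (V, A)`. -/
noncomputable def extAct {V E : Type} [Fintype V] [Fintype E] [DecidableEq E] [LinearOrder E]
    (ends : E → Sym2 V) (A : Finset E) : Finset E :=
  Finset.univ.filter (ExternallyActive ends A)

/-!
Adding one edge to a graph lowers the number of components by at most one, so
`|V| ≤ |B| + k(B)` for every edge set `B`, with equality for forests. For a spanning forest `F`,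
`k(F + f)` lies between `k(G) = k(F)` and `k(F)`, and `k(F - e)` is squeezed to `k(F) + 1`.
Finally `k(F - e + f)` is `k(F - e)` or `k(F)`; in the latter case `F - e + f` has `|F|` edges
and `k(F)` components, so it is a spanning forest, and whichever of `e < f`, `f < e` holds
contradicts the activity of `e` or of `f`.
-/

open Finset SimpleGraph

section EdgeGraph

variable {V E : Type} (ends : E → Sym2 V)

lemma edgeGraph_mono {A B : Finset E} (h : A ⊆ B) : edgeGraph ends A ≤ edgeGraph ends B := by
  rintro a b ⟨hab, e, he, hs⟩
  exact ⟨hab, e, h he, hs⟩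

lemma edgeGraph_empty : edgeGraph ends (∅ : Finset E) = ⊥ := by
  ext
  simp [edgeGraph]

lemma kc_anti [Finite V] {A B : Finset E} (h : A ⊆ B) : kc ends B ≤ kc ends A :=
  ConnectedComponent.card_le_card_of_le (edgeGraph_mono ends h)

lemma kc_empty [Fintype V] : kc ends (∅ : Finset E) = Fintype.card V := by
  rw [kc, edgeGraph_empty, ← Nat.card_eq_fintype_card]
  exact (Nat.card_eq_of_bijective _ ⟨fun _ _ h => reachable_bot.1 (ConnectedComponent.eq.1 h),
    Quot.mk_surjective⟩).symm

variable [DecidableEq E]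

lemma reachable_or_of_reachable_insert {A : Finset E} {f : E} {u v : V} (hf : ends f = s(u, v))
    {a b : V} (h : (edgeGraph ends (insert f A)).Reachable a b) :
    (edgeGraph ends A).Reachable a b ∨ (edgeGraph ends A).Reachable a u ∨
      (edgeGraph ends A).Reachable a v := by
  obtain ⟨w⟩ := h
  induction w with
  | nil => exact .inl .rfl
  | @cons a c b hac _ ih =>
    obtain ⟨hne, g, hg, hs⟩ := hac
    rcases mem_insert.1 hg with rfl | hgA
    · rcases Sym2.mem_iff.1 (hf ▸ hs ▸ Sym2.mem_mk_left a c) with rfl | rfl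
      · exact .inr (.inl .rfl)
      · exact .inr (.inr .rfl)
    · have hadj : (edgeGraph ends A).Adj a c := ⟨hne, g, hgA, hs⟩
      exact ih.imp hadj.reachable.trans (Or.imp hadj.reachable.trans hadj.reachable.trans)

lemma kc_le_kc_insert_add_one [Finite V] (A : Finset E) (f : E) :
    kc ends A ≤ kc ends (insert f A) + 1 := by
  obtain ⟨⟨u, v⟩, hf⟩ := Sym2.mk_surjective (ends f)
  set G := edgeGraph ends A
  set G' := edgeGraph ends (insert f A)
  let φ := ConnectedComponent.map (Hom.ofLE (edgeGraph_mono ends (subset_insert f A)))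
  have hreach : ∀ a b, ¬ G.Reachable a u → ¬ G.Reachable b u → G'.Reachable a b →
      G.Reachable a b := by
    intro a b hau hbu hab
    rcases reachable_or_of_reachable_insert ends hf.symm hab with h | h | hav
    · exact h
    · exact absurd h hau
    rcases reachable_or_of_reachable_insert ends hf.symm hab.symm with h | h | hbv
    · exact h.symm
    · exact absurd h hbu
    · exact hav.trans hbv.symm
  -- `φ` is injective off the component of `u`, which alone is sent to `none`.
  have hinj : Function.Injective fun c : G.ConnectedComponent =>
      if c = G.connectedComponentMk u then none else some (φ c) := by
    intro c d hcd
    induction c using ConnectedComponent.ind with | h a =>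
    induction d using ConnectedComponent.ind with | h b =>
    by_cases ha : G.Reachable a u <;> by_cases hb : G.Reachable b u <;>
      simp only [ConnectedComponent.eq, ha, hb, if_true, if_false, reduceCtorEq,
        Option.some.injEq] at hcd
    · exact ConnectedComponent.eq.2 (ha.trans hb.symm)
    · exact ConnectedComponent.eq.2 (hreach a b ha hb (ConnectedComponent.eq.1 hcd))
  calc kc ends A ≤ Nat.card (Option G'.ConnectedComponent) := Nat.card_le_card_of_injective _ hinj
    _ = kc ends (insert f A) + 1 := Finite.card_option

lemma card_le_card_add_kc [Fintype V] (B : Finset E) :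
    Fintype.card V ≤ B.card + kc ends B := by
  induction B using Finset.induction_on with
  | empty => simp [kc_empty]
  | @insert f B hfB ih =>
    have := kc_le_kc_insert_add_one ends B f
    rw [card_insert_of_notMem hfB]
    omega

end EdgeGraph

namespace IsSpanningForest

variable {V E : Type} [Fintype V] [Fintype E] [DecidableEq E] {ends : E → Sym2 V} {A : Finset E}

lemma kc_insert (hF : IsSpanningForest ends A) (f : E) : kc ends (insert f A) = kc ends A :=
  le_antisymm (kc_anti ends (subset_insert f A))
    (hF.2 ▸ kc_anti ends (subset_univ (insert f A)))

lemma kc_erase (hF : IsSpanningForest ends A) {e : E} (he : e ∈ A) :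
    kc ends (A.erase e) = kc ends A + 1 := by
  have hupper := kc_le_kc_insert_add_one ends (A.erase e) e
  rw [insert_erase he] at hupper
  have hlower := card_le_card_add_kc ends (A.erase e)
  have hcard := card_erase_add_one he
  have hforest := hF.1
  omega

lemma swapEdge_of_kc_eq (hF : IsSpanningForest ends A) {e f : E} (he : e ∈ A) (hf : f ∉ A)
    (hk : kc ends (swapEdge A e f) = kc ends A) : IsSpanningForest ends (swapEdge A e f) := by
  have hcard : (swapEdge A e f).card = A.card := by
    rw [swapEdge, card_insert_of_notMem (fun h => hf (mem_of_mem_erase h)),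
      card_erase_add_one he]
  exact ⟨hcard ▸ hk ▸ hF.1, hk ▸ hF.2⟩

end IsSpanningForest

lemma not_isSpanningForest_swapEdge {V E : Type} [Fintype V] [Fintype E] [DecidableEq E]
    [LinearOrder E] {ends : E → Sym2 V} {A : Finset E} {e f : E}
    (he : InternallyActive ends A e) (hf : ExternallyActive ends A f) :
    ¬ IsSpanningForest ends (swapEdge A e f) := fun hSF =>
  match lt_trichotomy e f with
  | .inl hlt => he.2 ⟨f, hf.1, hlt, hSF⟩
  | .inr (.inl heq) => hf.1 (heq ▸ he.1)
  | .inr (.inr hgt) => hf.2 ⟨e, he.1, hgt, hSF⟩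

/-- For a spanning forest `F`, an internally active edge `e` and an
externally active edge `f`: `k(F) = k(F + f)` and
`k(F − e + f) = k(F − e) = k(F) + 1`. -/
theorem active_edges_independence {V E : Type} [Fintype V] [Fintype E] [DecidableEq E]
    [LinearOrder E] (ends : E → Sym2 V) (A : Finset E)
    (hF : IsSpanningForest ends A) (e f : E)
    (he : InternallyActive ends A e) (hf : ExternallyActive ends A f) :
    kc ends A = kc ends (insert f A) ∧
    kc ends (swapEdge A e f) = kc ends (A.erase e) ∧
    kc ends (A.erase e) = kc ends A + 1 := by
  have herase := hF.kc_erase he.1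
  refine ⟨(hF.kc_insert f).symm, ?_, herase⟩
  have hle : kc ends (swapEdge A e f) ≤ kc ends (A.erase e) :=
    kc_anti ends (subset_insert f _)
  have hge : kc ends (A.erase e) ≤ kc ends (swapEdge A e f) + 1 :=
    kc_le_kc_insert_add_one ends _ f
  by_contra hne
  exact not_isSpanningForest_swapEdge he hf (hF.swapEdge_of_kc_eq he.1 hf.1 (by omega))
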